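/- Fix d ≥ 2 and c > 0. For 0 < δ ≤ 1 let C_kak(δ) denote the infimum of all constants C such that ∫_{ℝ^d} ∏_{j=1}^d ( ∑_{T ∈ 𝕋_j} χ_T )^{1/(d-1)} ≤ C δ^d ∏_{j=1}^d (#𝕋_j)^{1/(d-1)} holds for all c-transversal families 𝕋₁, …, 𝕋_d of δ-tubes of unit length. Then there is a constant c₀ ≥ 1, depending only on d and c, such that C_kak(δ) ≤ c₀ · C_kak(δ/δ') · C_kak(δ') for all 0 < δ ≤ δ' ≤ 1. -/

import Mathlib

open MeasureTheory Metric
open scoped InnerProductSpace ENNReal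

/-- The `δ`-tube of unit length in `ℝ^d` with corner `a` and orthonormal frame `v`
(the long side, of length 1, points in the direction `v (Fin.last n)`; the `d-1`
short sides have length `δ`): a rectangular box congruent to `[0,δ]^{d-1} × [0,1]`. -/
noncomputable def unitTube {n : ℕ} (δ : ℝ) (a : EuclideanSpace ℝ (Fin (n + 1)))
    (v : Fin (n + 1) → EuclideanSpace ℝ (Fin (n + 1))) :
    Set (EuclideanSpace ℝ (Fin (n + 1))) :=
  {x | (∀ i : Fin n, ⟪x - a, v i.castSucc⟫_ℝ ∈ Set.Icc (0 : ℝ) δ) ∧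
    ⟪x - a, v (Fin.last n)⟫_ℝ ∈ Set.Icc (0 : ℝ) 1}

/-- The `d`-linear Kakeya inequality at scale `δ` with constant `C`, over all
`c`-transversal families `𝕋₁, …, 𝕋_d` of `δ`-tubes of unit length (each tube recorded
as a pair `(a, v)` of a corner and an orthonormal frame, with direction
`e(T) = v (Fin.last n)`). -/
def KakIneq (n : ℕ) (c δ C : ℝ) : Prop :=
  ∀ 𝕋 : Fin (n + 1) →
      Finset (EuclideanSpace ℝ (Fin (n + 1)) ×
        (Fin (n + 1) → EuclideanSpace ℝ (Fin (n + 1)))),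
    (∀ j, ∀ T ∈ 𝕋 j, Orthonormal ℝ T.2) →
    (∀ T : (j : Fin (n + 1)) →
        EuclideanSpace ℝ (Fin (n + 1)) × (Fin (n + 1) → EuclideanSpace ℝ (Fin (n + 1))),
      (∀ j, T j ∈ 𝕋 j) →
      c ≤ |Matrix.det (Matrix.of fun i j => (T j).2 (Fin.last n) i)|) →
    ∫⁻ x, ∏ j, (∑ T ∈ 𝕋 j,
        (unitTube δ T.1 T.2).indicator (fun _ => (1 : ℝ≥0∞)) x) ^ (1 / (n : ℝ))
      ≤ ENNReal.ofReal (C * δ ^ (n + 1)) * ∏ j, ((𝕋 j).card : ℝ≥0∞) ^ (1 / (n : ℝ))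

/-- `C_kak(δ)`: the smallest constant in the `d`-linear Kakeya inequality at scale `δ`
over all `c`-transversal families of `δ`-tubes of unit length. -/
noncomputable def KakConst (n : ℕ) (c δ : ℝ) : ℝ :=
  sInf {C : ℝ | 0 ≤ C ∧ KakIneq n c δ C}

/-!
Induction on scales. Rescale space by `δ'` and cut it into cubes `Q` of diameter at most `1 / 8`.
Inside `Q` the rescaled `δ`-tubes are `δ / δ'`-tubes of length at most `1 / 8`, each covered by
boundedly many `δ / δ'`-tubes of unit length, so the inequality at scale `δ / δ'` bounds the
integral over `Q` by `C(δ / δ') (δ / δ')ᵈ ∏ⱼ Nⱼ(Q) ^ (1 / (d - 1))`, where `Nⱼ(Q)` counts the tubes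
of `𝕋ⱼ` meeting `δ' Q`. For `y ∈ Q`, the point `δ' y` lies in the `δ' / 8`-neighbourhood of each
of these tubes, and that neighbourhood is covered by boundedly many `δ'`-tubes; so `Nⱼ(Q)` is at
most the number of these thick tubes through `δ' y`, and integrating over `y` and applying the
inequality at scale `δ'` to the thick tubes bounds the sum over the cubes by `C(δ')` times the
cardinalities.

`KakConst` is `0` when no constant works; this is consistent with the claim because the inequality
at scale `δ` implies it, with a constant depending on `d` only, at every coarser scale.
-/

theorem lintegral_eq_tsum_fiber {α ι : Type*} [MeasurableSpace α] [MeasurableSpace ι]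
    [Countable ι] [MeasurableSingletonClass ι] {μ : Measure α} {π : α → ι} (hπ : Measurable π)
    (f : α → ℝ≥0∞) : ∫⁻ x, f x ∂μ = ∑' i, ∫⁻ x in π ⁻¹' {i}, f x ∂μ := by
  rw [← lintegral_iUnion (fun i => hπ (measurableSet_singleton i)) (pairwise_disjoint_fiber π),
    ← Set.preimage_iUnion, Set.iUnion_of_singleton, Set.preimage_univ, Measure.restrict_univ]

theorem mul_lintegral_le_of_forall_fiber {α ι : Type*} [MeasurableSpace α] [MeasurableSpace ι]
    [Countable ι] [MeasurableSingletonClass ι] {μ : Measure α} {π : α → ι} (hπ : Measurable π)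
    {m K : ℝ≥0∞} {Φ : ι → ℝ≥0∞} {f g : α → ℝ≥0∞} (hμ : ∀ i, μ (π ⁻¹' {i}) = m)
    (hf : ∀ i, ∫⁻ x in π ⁻¹' {i}, f x ∂μ ≤ K * Φ i) (hg : ∀ x, Φ (π x) ≤ g x) :
    m * ∫⁻ x, f x ∂μ ≤ K * ∫⁻ x, g x ∂μ := by
  have hΦ : ∀ i, m * Φ i ≤ ∫⁻ x in π ⁻¹' {i}, g x ∂μ := fun i => by
    rw [mul_comm, ← hμ i, ← setLIntegral_const]
    exact setLIntegral_mono' (hπ (measurableSet_singleton i)) fun x hx => hx ▸ hg x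
  calc m * ∫⁻ x, f x ∂μ ≤ m * ∑' i, K * Φ i := by
        rw [lintegral_eq_tsum_fiber hπ]; gcongr with i; exact hf i
    _ = K * ∑' i, m * Φ i := by rw [ENNReal.tsum_mul_left, ENNReal.tsum_mul_left, mul_left_comm]
    _ ≤ K * ∫⁻ x, g x ∂μ := by rw [lintegral_eq_tsum_fiber hπ]; gcongr with i; exact hΦ i

theorem lintegral_eq_mul_lintegral_comp_smul {E : Type*} [NormedAddCommGroup E]
    [NormedSpace ℝ E] [MeasurableSpace E] [BorelSpace E] [FiniteDimensional ℝ E]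
    (μ : Measure E) [μ.IsAddHaarMeasure] {r : ℝ} (hr : 0 < r) (f : E → ℝ≥0∞) :
    ∫⁻ x, f x ∂μ = ENNReal.ofReal (r ^ Module.finrank ℝ E) * ∫⁻ y, f (r • y) ∂μ := by
  have hmap : ∫⁻ y, f (r • y) ∂μ = ∫⁻ x, f x ∂(μ.map (r • ·)) :=
    (lintegral_map_equiv f (Homeomorph.smulOfNeZero r hr.ne').toMeasurableEquiv).symm
  rw [hmap, Measure.map_addHaar_smul μ hr.ne', lintegral_smul_measure, smul_eq_mul, ← mul_assoc,
    ← ENNReal.ofReal_mul (by positivity), abs_of_pos (by positivity),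
    mul_inv_cancel₀ (by positivity), ENNReal.ofReal_one, one_mul]

theorem le_of_mul_le_of_mul_le {a m K B D I J R : ℝ≥0∞} (hm₀ : m ≠ 0) (hm : m ≠ ⊤)
    (hI : m * I ≤ K * J) (hJ : a * J ≤ B * R) (hKB : K * B = m * D) : a * I ≤ D * R := by
  rw [← ENNReal.mul_le_mul_iff_right hm₀ hm]
  calc m * (a * I) = a * (m * I) := mul_left_comm _ _ _
    _ ≤ a * (K * J) := by gcongr
    _ = K * (a * J) := mul_left_comm _ _ _
    _ ≤ K * (B * R) := by gcongr
    _ = m * (D * R) := by rw [← mul_assoc, hKB, mul_assoc]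

theorem le_mul_csInf {s : Set ℝ} {a x : ℝ} (hs : s.Nonempty) (ha : 0 ≤ a)
    (h : ∀ y ∈ s, x ≤ a * y) : x ≤ a * sInf s := by
  rw [← smul_eq_mul, ← Real.sInf_smul_of_nonneg ha]
  exact le_csInf hs.smul_set (by rintro _ ⟨y, hy, rfl⟩; exact h y hy)

theorem csInf_le_mul_csInf_mul_csInf {r s t : Set ℝ} {a : ℝ} (ha : 0 ≤ a) (hr : ∀ x ∈ r, 0 ≤ x)
    (hs : ∀ x ∈ s, 0 ≤ x) (ht : ∀ x ∈ t, 0 ≤ x) (hmul : ∀ x ∈ s, ∀ y ∈ t, a * x * y ∈ r)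
    (hne : r.Nonempty → s.Nonempty ∧ t.Nonempty) : sInf r ≤ a * sInf s * sInf t := by
  by_cases hst : s.Nonempty ∧ t.Nonempty
  · have hs' : ∀ x ∈ s, sInf r ≤ a * x * sInf t := fun x hx =>
      le_mul_csInf hst.2 (mul_nonneg ha (hs x hx)) fun y hy => csInf_le ⟨0, hr⟩ (hmul x hx y hy)
    calc sInf r ≤ a * sInf t * sInf s :=
          le_mul_csInf hst.1 (mul_nonneg ha (Real.sInf_nonneg ht)) fun x hx =>
            (hs' x hx).trans_eq (by ring)
      _ = a * sInf s * sInf t := by ring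
  · rw [Set.not_nonempty_iff_eq_empty.mp (mt hne hst), Real.sInf_empty]
    exact mul_nonneg (mul_nonneg ha (Real.sInf_nonneg hs)) (Real.sInf_nonneg ht)

theorem prod_rpow_le_of_le_mul_pow {ι : Type*} [Fintype ι] {n : ℕ} (hn : n ≠ 0)
    {N M : ι → ℝ≥0∞} {b : ℝ≥0∞} (h : ∀ j, N j ≤ M j * b ^ n) :
    ∏ j, N j ^ (1 / (n : ℝ)) ≤ b ^ Fintype.card ι * ∏ j, M j ^ (1 / (n : ℝ)) := calc
  ∏ j, N j ^ (1 / (n : ℝ)) ≤ ∏ j, (M j * b ^ n) ^ (1 / (n : ℝ)) := by gcongr with j; exact h j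
  _ = ∏ j, (M j ^ (1 / (n : ℝ)) * b) := by
      simp_rw [ENNReal.mul_rpow_of_nonneg _ _ (by positivity : (0 : ℝ) ≤ 1 / n), one_div,
        ENNReal.pow_rpow_inv_natCast hn]
  _ = b ^ Fintype.card ι * ∏ j, M j ^ (1 / (n : ℝ)) := by
      rw [Finset.prod_mul_distrib, Finset.prod_const, Finset.card_univ, mul_comm]

theorem exists_injOn_mapsTo_Ico {α : Type*} {s : Set α} (hs : s.Finite) :
    ∃ f : α → ℝ, Set.InjOn f s ∧ Set.MapsTo f s (Set.Ico 0 1) := by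
  obtain ⟨f, hmaps, hinj⟩ := hs.exists_injOn_of_encard_le (t := Set.Ico (0 : ℝ) 1)
    (by rw [(Set.Ico_infinite zero_lt_one).encard_eq]; exact le_top)
  exact ⟨f, hinj, hmaps⟩

theorem Orthonormal.inner_sum_smul_left {ι E : Type*} [Fintype ι] [NormedAddCommGroup E]
    [InnerProductSpace ℝ E] {v : ι → E} (hv : Orthonormal ℝ v) (l : ι → ℝ) (i : ι) :
    ⟪∑ j, l j • v j, v i⟫_ℝ = l i := by
  simpa using hv.inner_left_fintype l i

theorem indicator_one_le_indicator_one {α β : Type*} {s : Set α} {t : Set β} {a : α} {b : β}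
    (h : a ∈ s → b ∈ t) : s.indicator (fun _ => (1 : ℝ≥0∞)) a ≤ t.indicator (fun _ => 1) b := by
  by_cases ha : a ∈ s
  · simp [ha, h ha]
  · simp [ha]

section CubeGrid

variable {ι : Type*}

noncomputable def cubeIndex (u : ℝ) (y : EuclideanSpace ℝ ι) : ι → ℤ := fun i => ⌊y i / u⌋

noncomputable def cubeCorner (u : ℝ) (k : ι → ℤ) : EuclideanSpace ℝ ι :=
  WithLp.toLp 2 fun i => u * k i

theorem measurable_cubeIndex (u : ℝ) : Measurable (cubeIndex (ι := ι) u) :=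
  measurable_pi_lambda _ fun i => Int.measurable_floor.comp (by fun_prop)

theorem cubeIndex_eq_iff {u : ℝ} (hu : 0 < u) {y : EuclideanSpace ℝ ι} {k : ι → ℤ} :
    cubeIndex u y = k ↔ ∀ i, y i ∈ Set.Ico (u * k i) (u * (k i + 1)) := by
  simp only [cubeIndex, funext_iff, Int.floor_eq_iff, le_div_iff₀ hu, div_lt_iff₀ hu,
    Set.mem_Ico, mul_comm u]

theorem volume_cubeIndex_preimage [Fintype ι] {u : ℝ} (hu : 0 < u) (k : ι → ℤ) :
    volume (cubeIndex u ⁻¹' {k}) = ENNReal.ofReal (u ^ Fintype.card ι) := by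
  have hcube : cubeIndex u ⁻¹' {k} = (MeasurableEquiv.toLp 2 (ι → ℝ)).symm ⁻¹'
      Set.univ.pi fun i => Set.Ico (u * k i) (u * (k i + 1)) := by
    ext y; simp [cubeIndex_eq_iff hu]
  rw [hcube, (EuclideanSpace.volume_preserving_symm_measurableEquiv_toLp ι).measure_preimage
    (MeasurableSet.univ_pi fun _ => measurableSet_Ico).nullMeasurableSet, volume_pi_pi]
  simp [Real.volume_Ico, mul_add, ENNReal.ofReal_pow hu.le]

theorem norm_sub_cubeCorner_le [Fintype ι] {u : ℝ} (hu : 0 < u) (y : EuclideanSpace ℝ ι) :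
    ‖y - cubeCorner u (cubeIndex u y)‖ ≤ Fintype.card ι * u := by
  have hcoord : ∀ i, ‖(y - cubeCorner u (cubeIndex u y)) i‖ ^ 2 ≤ u ^ 2 := fun i => by
    have h₀ := Int.sub_floor_div_mul_nonneg (y i) hu
    have h₁ := Int.sub_floor_div_mul_lt (y i) hu
    simp only [PiLp.sub_apply, cubeCorner, cubeIndex, Real.norm_eq_abs, sq_abs]
    nlinarith
  have hcard : √(Fintype.card ι : ℝ) ≤ Fintype.card ι :=
    Real.sqrt_le_iff.mpr ⟨by positivity, by exact_mod_cast Nat.le_self_pow two_ne_zero _⟩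
  calc ‖y - cubeCorner u (cubeIndex u y)‖
      = √(∑ i, ‖(y - cubeCorner u (cubeIndex u y)) i‖ ^ 2) := EuclideanSpace.norm_eq _
    _ ≤ √(Fintype.card ι * u ^ 2) :=
        Real.sqrt_le_sqrt ((Finset.sum_le_sum fun i _ => hcoord i).trans_eq (by simp))
    _ = √(Fintype.card ι : ℝ) * u := by rw [Real.sqrt_mul (by positivity), Real.sqrt_sq hu.le]
    _ ≤ Fintype.card ι * u := by gcongr

end CubeGrid

namespace Kakeya

open scoped Finset

variable {n : ℕ}

abbrev Point (n : ℕ) := EuclideanSpace ℝ (Fin (n + 1))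

abbrev Tube (n : ℕ) := Point n × (Fin (n + 1) → Point n)

def tubeSide (t : ℝ) : Fin (n + 1) → ℝ := Fin.lastCases 1 fun _ => t

theorem tubeSide_pos {t : ℝ} (ht : 0 < t) (i : Fin (n + 1)) : 0 < tubeSide t i := by
  induction i using Fin.lastCases <;> simp [tubeSide, ht]

theorem tubeSide_nonneg {t : ℝ} (ht : 0 ≤ t) (i : Fin (n + 1)) : 0 ≤ tubeSide t i := by
  induction i using Fin.lastCases <;> simp [tubeSide, ht]

def frameBox (v : Fin (n + 1) → Point n) (A w : Fin (n + 1) → ℝ) : Set (Point n) :=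
  {x | ∀ i, ⟪x, v i⟫_ℝ - A i ∈ Set.Icc 0 (w i)}

theorem mem_unitTube_iff {t : ℝ} {a x : Point n} {v : Fin (n + 1) → Point n} :
    x ∈ unitTube t a v ↔ x ∈ frameBox v (fun i => ⟪a, v i⟫_ℝ) (tubeSide t) := by
  simp only [unitTube, frameBox, Set.mem_ofPred_eq, Fin.forall_fin_succ', tubeSide,
    Fin.lastCases_castSucc, Fin.lastCases_last, inner_sub_left]

theorem mem_frameBox_of_norm_sub_le {t r : ℝ} {a x x₀ : Point n} {v : Fin (n + 1) → Point n}
    (hv : Orthonormal ℝ v) (hx₀ : x₀ ∈ unitTube t a v) (hx : ‖x - x₀‖ ≤ r) :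
    x ∈ frameBox v (fun i => ⟪a, v i⟫_ℝ - r) (fun i => tubeSide t i + 2 * r) := by
  intro i
  have hi := mem_unitTube_iff.mp hx₀ i
  have hclose : |⟪x, v i⟫_ℝ - ⟪x₀, v i⟫_ℝ| ≤ r := by
    rw [← inner_sub_left]
    exact (abs_real_inner_le_norm _ _).trans (by rw [hv.1 i, mul_one]; exact hx)
  rw [abs_le] at hclose
  constructor <;> linarith [hi.1, hi.2]

theorem mem_frameBox_of_smul_mem_unitTube {t r ρ : ℝ} {a y z : Point n}
    {v : Fin (n + 1) → Point n} (hv : Orthonormal ℝ v) (hr : 0 < r) (hy : r • y ∈ unitTube t a v)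
    (hz : ‖y - z‖ ≤ ρ) :
    y ∈ frameBox v (Fin.lastCases (⟪z, v (Fin.last n)⟫_ℝ - ρ) fun i => ⟪r⁻¹ • a, v i.castSucc⟫_ℝ)
      (Fin.lastCases (2 * ρ) fun _ => t / r) := by
  have hy' := mem_unitTube_iff.mp hy
  refine Fin.lastCases ?_ (fun i => ?_)
  · have hclose : |⟪y, v (Fin.last n)⟫_ℝ - ⟪z, v (Fin.last n)⟫_ℝ| ≤ ρ := by
      rw [← inner_sub_left]
      exact (abs_real_inner_le_norm _ _).trans (by rw [hv.1, mul_one]; exact hz)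
    rw [abs_le] at hclose
    simp only [Fin.lastCases_last, Set.mem_Icc]
    constructor <;> linarith
  · have hi := hy' i.castSucc
    simp only [tubeSide, Fin.lastCases_castSucc, real_inner_smul_left, Set.mem_Icc] at hi ⊢
    have hrescale : ⟪y, v i.castSucc⟫_ℝ - r⁻¹ * ⟪a, v i.castSucc⟫_ℝ
        = (r * ⟪y, v i.castSucc⟫_ℝ - ⟪a, v i.castSucc⟫_ℝ) / r := by field_simp
    rw [hrescale]
    exact ⟨div_nonneg hi.1 hr.le, div_le_div_of_nonneg_right hi.2 hr.le⟩

/-- The `t`-tubes with frame `v` whose corners lie, in frame coordinates, on the grid of mesh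
`tubeSide t` shifted by `ε`, and whose grid indices range over those of `frameBox v A w`. -/
noncomputable def tubeCover (t ε : ℝ) (v : Fin (n + 1) → Point n) (A w : Fin (n + 1) → ℝ) :
    Finset (Tube n) :=
  (Fintype.piFinset fun i =>
      Finset.Icc ⌊(A i - ε) / tubeSide t i⌋ ⌊(A i - ε + w i) / tubeSide t i⌋).image
    fun g => (∑ i, (tubeSide t i * g i + ε) • v i, v)

theorem exists_mem_tubeCover {t ε : ℝ} {v : Fin (n + 1) → Point n} {A w : Fin (n + 1) → ℝ}
    {x : Point n} (hv : Orthonormal ℝ v) (ht : 0 < t) (hx : x ∈ frameBox v A w) :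
    ∃ S ∈ tubeCover t ε v A w, x ∈ unitTube t S.1 S.2 := by
  set g : Fin (n + 1) → ℤ := fun i => ⌊(⟪x, v i⟫_ℝ - ε) / tubeSide t i⌋
  refine ⟨(∑ i, (tubeSide t i * g i + ε) • v i, v),
    Finset.mem_image.mpr ⟨g, Fintype.mem_piFinset.mpr fun i => ?_, rfl⟩, ?_⟩
  · have hs := tubeSide_pos ht i
    obtain ⟨hlo, hhi⟩ := hx i
    exact Finset.mem_Icc.mpr ⟨Int.floor_le_floor (by gcongr; linarith),
      Int.floor_le_floor (by gcongr; linarith)⟩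
  · refine mem_unitTube_iff.mpr fun i => ?_
    have hs := tubeSide_pos ht i
    have h₀ := Int.sub_floor_div_mul_nonneg (⟪x, v i⟫_ℝ - ε) hs
    have h₁ := Int.sub_floor_div_mul_lt (⟪x, v i⟫_ℝ - ε) hs
    dsimp only
    rw [hv.inner_sum_smul_left]
    constructor <;> linarith

theorem fract_inner_last_of_mem_tubeCover {t ε : ℝ} {v : Fin (n + 1) → Point n}
    {A w : Fin (n + 1) → ℝ} {S : Tube n} (hv : Orthonormal ℝ v) (hε : ε ∈ Set.Ico 0 1)
    (hS : S ∈ tubeCover t ε v A w) : S.2 = v ∧ Int.fract ⟪S.1, v (Fin.last n)⟫_ℝ = ε := by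
  obtain ⟨g, -, rfl⟩ := Finset.mem_image.mp hS
  refine ⟨rfl, ?_⟩
  rw [hv.inner_sum_smul_left]
  simpa [tubeSide] using Int.fract_eq_self.mpr hε

theorem card_Icc_floor_div_le (a w s : ℝ) (h : 0 ≤ w / s) :
    (#(Finset.Icc ⌊a / s⌋ ⌊(a + w) / s⌋) : ℝ) ≤ w / s + 2 := by
  have hlo := Int.lt_floor_add_one (a / s)
  have hhi := Int.floor_le ((a + w) / s)
  rw [Int.card_Icc, ← Int.cast_natCast, Int.toNat_eq_max]
  push_cast
  refine max_le ?_ (by linarith)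
  rw [add_div] at hhi ⊢
  linarith

theorem card_tubeCover_le_prod {t ε : ℝ} {v : Fin (n + 1) → Point n} {A w : Fin (n + 1) → ℝ}
    (ht : 0 ≤ t) (hw : ∀ i, 0 ≤ w i) :
    (#(tubeCover t ε v A w) : ℝ) ≤ ∏ i, (w i / tubeSide t i + 2) := calc
  (#(tubeCover t ε v A w) : ℝ)
      ≤ ∏ i, (#(Finset.Icc ⌊(A i - ε) / tubeSide t i⌋ ⌊(A i - ε + w i) / tubeSide t i⌋) : ℝ) := by
        rw [← Nat.cast_prod, ← Fintype.card_piFinset]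
        exact_mod_cast Finset.card_image_le
  _ ≤ ∏ i, (w i / tubeSide t i + 2) := Finset.prod_le_prod (fun _ _ => by positivity)
        fun i _ => card_Icc_floor_div_le _ _ _ (div_nonneg (hw i) (tubeSide_nonneg ht i))

theorem card_tubeCover_le {t ε K L : ℝ} {v : Fin (n + 1) → Point n} {A w : Fin (n + 1) → ℝ}
    (hn : n ≠ 0) (ht : 0 ≤ t) (hw : ∀ i, 0 ≤ w i) (hK : ∀ i : Fin n, w i.castSucc / t + 2 ≤ K)
    (hL : w (Fin.last n) + 2 ≤ L) :
    (#(tubeCover t ε v A w) : ℝ≥0∞) ≤ ENNReal.ofReal (K * L) ^ n := by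
  have hshort : ∏ i : Fin n, (w i.castSucc / t + 2) ≤ K ^ n := by
    refine (Finset.prod_le_prod (s := Finset.univ)
      (fun i _ => by linarith [div_nonneg (hw i.castSucc) ht]) fun i _ => hK i).trans_eq ?_
    simp
  have hK0 : 0 ≤ K := by
    have := hK ⟨0, Nat.pos_of_ne_zero hn⟩
    have := div_nonneg (hw (Fin.castSucc ⟨0, Nat.pos_of_ne_zero hn⟩)) ht
    linarith
  have hL1 : 1 ≤ L := by linarith [hw (Fin.last n)]
  have hreal : (#(tubeCover t ε v A w) : ℝ) ≤ (K * L) ^ n := calc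
    (#(tubeCover t ε v A w) : ℝ) ≤ ∏ i, (w i / tubeSide t i + 2) := card_tubeCover_le_prod ht hw
    _ = (∏ i : Fin n, (w i.castSucc / t + 2)) * (w (Fin.last n) + 2) := by
        simp [Fin.prod_univ_castSucc, tubeSide]
    _ ≤ K ^ n * L := by gcongr; linarith [hw (Fin.last n)]
    _ ≤ K ^ n * L ^ n := by gcongr; exact le_self_pow₀ hL1 hn
    _ = (K * L) ^ n := (mul_pow K L n).symm
  rw [← ENNReal.ofReal_natCast, ← ENNReal.ofReal_pow (by positivity)]
  exact ENNReal.ofReal_le_ofReal hreal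

noncomputable def tubeCount (t : ℝ) (s : Finset (Tube n)) (x : Point n) : ℝ≥0∞ :=
  ∑ T ∈ s, (unitTube t T.1 T.2).indicator (fun _ => 1) x

noncomputable def tubeLabel (s : Finset (Tube n)) : Tube n → ℝ :=
  Classical.choose (exists_injOn_mapsTo_Ico s.finite_toSet)

theorem tubeLabel_spec (s : Finset (Tube n)) :
    Set.InjOn (tubeLabel s) s ∧ Set.MapsTo (tubeLabel s) s (Set.Ico 0 1) :=
  Classical.choose_spec (exists_injOn_mapsTo_Ico s.finite_toSet)

/-- The grid of the cover of each box is offset by the label of its tube, which keeps the covers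
of distinct tubes disjoint: the families are finite sets, so overlapping covers would merge. -/
noncomputable def familyCover (t : ℝ) (A : Tube n → Fin (n + 1) → ℝ) (w : Fin (n + 1) → ℝ)
    (s : Finset (Tube n)) : Finset (Tube n) :=
  s.biUnion fun T => tubeCover t (tubeLabel s T) T.2 (A T) w

section FamilyCover

variable {t : ℝ} {A : Tube n → Fin (n + 1) → ℝ} {w : Fin (n + 1) → ℝ} {s : Finset (Tube n)}

theorem pairwiseDisjoint_tubeCover (hs : ∀ T ∈ s, Orthonormal ℝ T.2) :
    (s : Set (Tube n)).PairwiseDisjoint fun T => tubeCover t (tubeLabel s T) T.2 (A T) w := by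
  obtain ⟨hinj, hmaps⟩ := tubeLabel_spec s
  intro T hT T' hT' hne
  refine Finset.disjoint_left.mpr fun S hS hS' => hne (hinj hT hT' ?_)
  obtain ⟨hST, hfr⟩ := fract_inner_last_of_mem_tubeCover (hs T hT) (hmaps hT) hS
  obtain ⟨hST', hfr'⟩ := fract_inner_last_of_mem_tubeCover (hs T' hT') (hmaps hT') hS'
  rw [← hfr, ← hfr', ← hST, ← hST']

theorem sum_le_tubeCount_familyCover {x : Point n} {f : Tube n → ℝ≥0∞} (ht : 0 < t)
    (hs : ∀ T ∈ s, Orthonormal ℝ T.2)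
    (hf : ∀ T ∈ s, f T ≤ (frameBox T.2 (A T) w).indicator (fun _ => 1) x) :
    ∑ T ∈ s, f T ≤ tubeCount t (familyCover t A w s) x := by
  rw [tubeCount, familyCover, Finset.sum_biUnion (pairwiseDisjoint_tubeCover hs)]
  refine Finset.sum_le_sum fun T hT => (hf T hT).trans ?_
  by_cases hx : x ∈ frameBox T.2 (A T) w
  · obtain ⟨S, hS, hxS⟩ := exists_mem_tubeCover (hs T hT) ht hx
    rw [Set.indicator_of_mem hx]
    exact (Set.indicator_of_mem hxS _).symm.le.trans (Finset.single_le_sum (fun _ _ => zero_le)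
      (f := fun S : Tube n => (unitTube t S.1 S.2).indicator (fun _ => 1) x) hS)
  · simp [hx]

theorem exists_frame_eq_of_mem_familyCover {S : Tube n} (hS : S ∈ familyCover t A w s) :
    ∃ T ∈ s, S.2 = T.2 := by
  obtain ⟨T, hT, hS⟩ := Finset.mem_biUnion.mp hS
  obtain ⟨g, -, rfl⟩ := Finset.mem_image.mp hS
  exact ⟨T, hT, rfl⟩

theorem card_familyCover_le {K L : ℝ} (hn : n ≠ 0) (ht : 0 ≤ t) (hw : ∀ i, 0 ≤ w i)
    (hK : ∀ i : Fin n, w i.castSucc / t + 2 ≤ K) (hL : w (Fin.last n) + 2 ≤ L) :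
    (#(familyCover t A w s) : ℝ≥0∞) ≤ #s * ENNReal.ofReal (K * L) ^ n := calc
  (#(familyCover t A w s) : ℝ≥0∞)
      ≤ ∑ T ∈ s, (#(tubeCover t (tubeLabel s T) T.2 (A T) w) : ℝ≥0∞) := by
        exact_mod_cast Finset.card_biUnion_le
  _ ≤ ∑ _T ∈ s, ENNReal.ofReal (K * L) ^ n :=
        Finset.sum_le_sum fun T _ => card_tubeCover_le hn ht hw hK hL
  _ = #s * ENNReal.ofReal (K * L) ^ n := by rw [Finset.sum_const, nsmul_eq_mul]

end FamilyCover

noncomputable def kakeyaIntegrand (t : ℝ) (𝕋 : Fin (n + 1) → Finset (Tube n)) (x : Point n) :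
    ℝ≥0∞ :=
  ∏ j, tubeCount t (𝕋 j) x ^ (1 / (n : ℝ))

def IsTransversalFamily (c : ℝ) (𝕋 : Fin (n + 1) → Finset (Tube n)) : Prop :=
  (∀ j, ∀ T ∈ 𝕋 j, Orthonormal ℝ T.2) ∧
    ∀ T : (j : Fin (n + 1)) → Tube n, (∀ j, T j ∈ 𝕋 j) →
      c ≤ |Matrix.det (Matrix.of fun i j => (T j).2 (Fin.last n) i)|

theorem IsTransversalFamily.of_frames {c : ℝ} {𝕋 𝕊 : Fin (n + 1) → Finset (Tube n)}
    (h𝕋 : IsTransversalFamily c 𝕋) (hframe : ∀ j, ∀ S ∈ 𝕊 j, ∃ T ∈ 𝕋 j, S.2 = T.2) :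
    IsTransversalFamily c 𝕊 := by
  refine ⟨fun j S hS => ?_, fun S hS => ?_⟩
  · obtain ⟨T, hT, hST⟩ := hframe j S hS
    exact hST ▸ h𝕋.1 j T hT
  · choose T hT hST using fun j => hframe j (S j) (hS j)
    simpa only [hST] using h𝕋.2 T hT

theorem kakIneq_iff {c t C : ℝ} :
    KakIneq n c t C ↔ ∀ 𝕋 : Fin (n + 1) → Finset (Tube n), IsTransversalFamily c 𝕋 →
      ∫⁻ x, kakeyaIntegrand t 𝕋 x ≤
      ENNReal.ofReal (C * t ^ (n + 1)) * ∏ j, (#(𝕋 j) : ℝ≥0∞) ^ (1 / (n : ℝ)) :=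
  ⟨fun h 𝕋 h𝕋 => h 𝕋 h𝕋.1 h𝕋.2, fun h 𝕋 h₁ h₂ => h 𝕋 ⟨h₁, h₂⟩⟩

theorem _root_.KakIneq.coarsen {c δ δ' C : ℝ} (h : KakIneq n c δ C) (hn : n ≠ 0) (hδ : 0 < δ)
    (hδδ' : δ ≤ δ') : KakIneq n c δ' (9 ^ (n + 1) * C) := by
  refine kakIneq_iff.mpr fun 𝕋 h𝕋 => ?_
  set 𝕊 : Fin (n + 1) → Finset (Tube n) := fun j =>
    familyCover δ (fun T i => ⟪T.1, T.2 i⟫_ℝ) (tubeSide δ') (𝕋 j)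
  have hcount : ∀ j x, tubeCount δ' (𝕋 j) x ≤ tubeCount δ (𝕊 j) x := fun j x =>
    sum_le_tubeCount_familyCover hδ (h𝕋.1 j) fun T _ =>
      indicator_one_le_indicator_one mem_unitTube_iff.mp
  have hratio : 1 ≤ δ' / δ := (one_le_div hδ).mpr hδδ'
  have hcard : ∀ j, (#(𝕊 j) : ℝ≥0∞) ≤ #(𝕋 j) * ENNReal.ofReal (3 * (δ' / δ) * 3) ^ n :=
    fun j => card_familyCover_le hn hδ.le (tubeSide_nonneg (hδ.le.trans hδδ'))
      (fun i => by simp only [tubeSide, Fin.lastCases_castSucc]; linarith)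
      (by simp only [tubeSide, Fin.lastCases_last]; norm_num)
  calc ∫⁻ x, kakeyaIntegrand δ' 𝕋 x
      ≤ ∫⁻ x, kakeyaIntegrand δ 𝕊 x := lintegral_mono fun x => by
        unfold kakeyaIntegrand; gcongr with j; exact hcount j x
    _ ≤ ENNReal.ofReal (C * δ ^ (n + 1)) * ∏ j, (#(𝕊 j) : ℝ≥0∞) ^ (1 / (n : ℝ)) :=
        kakIneq_iff.mp h 𝕊 (h𝕋.of_frames fun _ _ => exists_frame_eq_of_mem_familyCover)
    _ ≤ ENNReal.ofReal (C * δ ^ (n + 1)) * (ENNReal.ofReal (3 * (δ' / δ) * 3) ^ (n + 1) *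
          ∏ j, (#(𝕋 j) : ℝ≥0∞) ^ (1 / (n : ℝ))) := by
        gcongr
        simpa using prod_rpow_le_of_le_mul_pow hn hcard
    _ = ENNReal.ofReal (9 ^ (n + 1) * C * δ' ^ (n + 1)) *
          ∏ j, (#(𝕋 j) : ℝ≥0∞) ^ (1 / (n : ℝ)) := by
        rw [← mul_assoc, ← ENNReal.ofReal_pow (by positivity), mul_comm (ENNReal.ofReal _),
          ← ENNReal.ofReal_mul (by positivity)]
        congr 2
        rw [show 3 * (δ' / δ) * 3 = 9 * δ' / δ by ring, div_pow, mul_pow]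
        field_simp

open scoped Classical in
noncomputable def tubesMeetingCube (t r u : ℝ) (k : Fin (n + 1) → ℤ) (s : Finset (Tube n)) :
    Finset (Tube n) :=
  s.filter fun T => ∃ y, cubeIndex u y = k ∧ r • y ∈ unitTube t T.1 T.2

open scoped Classical in
theorem tubesMeetingCube_subset {t r u : ℝ} {k : Fin (n + 1) → ℤ} {s : Finset (Tube n)} :
    tubesMeetingCube t r u k s ⊆ s :=
  Finset.filter_subset _ _

section InductionOnScales

variable {c δ δ' u : ℝ} {𝕋 : Fin (n + 1) → Finset (Tube n)}

theorem norm_sub_cubeCorner_le_of_mul_le (hu : 0 < u) {ρ : ℝ} (hu' : (n + 1) * u ≤ ρ)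
    (y : Point n) : ‖y - cubeCorner u (cubeIndex u y)‖ ≤ ρ :=
  (norm_sub_cubeCorner_le hu y).trans (by simpa using hu')

/-- The `δ / δ'`-tubes covering, after rescaling by `δ'⁻¹`, the parts of the `δ`-tubes of `s`
near the cube of index `k`. -/
noncomputable def cubeCover (δ δ' u : ℝ) (k : Fin (n + 1) → ℤ) (s : Finset (Tube n)) :
    Finset (Tube n) :=
  familyCover (δ / δ') (fun T => Fin.lastCases (⟪cubeCorner u k, T.2 (Fin.last n)⟫_ℝ - 1 / 16)
    fun i => ⟪δ'⁻¹ • T.1, T.2 i.castSucc⟫_ℝ) (Fin.lastCases (2 * (1 / 16)) fun _ => δ / δ')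
    (tubesMeetingCube δ δ' u k s)

theorem tubeCount_le_tubeCount_cubeCover {s : Finset (Tube n)} {y : Point n} (hδ : 0 < δ)
    (hδ' : 0 < δ') (hu : 0 < u) (hu' : (n + 1) * u ≤ 1 / 16) (hs : ∀ T ∈ s, Orthonormal ℝ T.2) :
    tubeCount δ s (δ' • y) ≤ tubeCount (δ / δ') (cubeCover δ δ' u (cubeIndex u y) s) y := by
  classical
  have hs' : ∀ T ∈ tubesMeetingCube δ δ' u (cubeIndex u y) s, Orthonormal ℝ T.2 :=
    fun T hT => hs T (tubesMeetingCube_subset hT)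
  have hmeet : tubeCount δ s (δ' • y) = ∑ T ∈ tubesMeetingCube δ δ' u (cubeIndex u y) s,
      (unitTube δ T.1 T.2).indicator (fun _ => 1) (δ' • y) :=
    (Finset.sum_filter_of_ne fun T _ hT => ⟨y, rfl, Set.mem_of_indicator_ne_zero hT⟩).symm
  rw [hmeet]
  exact sum_le_tubeCount_familyCover (by positivity) hs' fun T hT =>
    indicator_one_le_indicator_one fun hTy => mem_frameBox_of_smul_mem_unitTube (hs' T hT) hδ'
      hTy (norm_sub_cubeCorner_le_of_mul_le hu hu' y)

theorem card_cubeCover_le {s : Finset (Tube n)} (hn : n ≠ 0) (hδ : 0 < δ) (hδ' : 0 < δ')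
    (k : Fin (n + 1) → ℤ) :
    (#(cubeCover δ δ' u k s) : ℝ≥0∞) ≤
      #(tubesMeetingCube δ δ' u k s) * ENNReal.ofReal (3 * 3) ^ n := by
  refine card_familyCover_le hn (by positivity) (fun i => ?_) (fun i => ?_) (by norm_num)
  · induction i using Fin.lastCases
    · norm_num
    · simpa using (div_pos hδ hδ').le
  · norm_num [div_self (div_pos hδ hδ').ne']

theorem setLIntegral_cube_le {C₂ : ℝ} (hn : n ≠ 0) (hδ : 0 < δ) (hδ' : 0 < δ') (hu : 0 < u)
    (hu' : (n + 1) * u ≤ 1 / 16) (H₂ : KakIneq n c (δ / δ') C₂) (h𝕋 : IsTransversalFamily c 𝕋)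
    (k : Fin (n + 1) → ℤ) :
    ∫⁻ y in cubeIndex u ⁻¹' {k}, kakeyaIntegrand δ 𝕋 (δ' • y) ≤
      ENNReal.ofReal (9 ^ (n + 1) * C₂ * (δ / δ') ^ (n + 1)) *
        ∏ j, (#(tubesMeetingCube δ δ' u k (𝕋 j)) : ℝ≥0∞) ^ (1 / (n : ℝ)) := by
  set 𝕊 : Fin (n + 1) → Finset (Tube n) := fun j => cubeCover δ δ' u k (𝕋 j)
  have hcount : ∀ j, ∀ y ∈ cubeIndex u ⁻¹' {k}, tubeCount δ (𝕋 j) (δ' • y) ≤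
      tubeCount (δ / δ') (𝕊 j) y := by
    rintro j y rfl
    exact tubeCount_le_tubeCount_cubeCover hδ hδ' hu hu' (h𝕋.1 j)
  calc ∫⁻ y in cubeIndex u ⁻¹' {k}, kakeyaIntegrand δ 𝕋 (δ' • y)
      ≤ ∫⁻ y in cubeIndex u ⁻¹' {k}, kakeyaIntegrand (δ / δ') 𝕊 y :=
        setLIntegral_mono' (measurable_cubeIndex u (measurableSet_singleton k)) fun y hy => by
          unfold kakeyaIntegrand
          gcongr with j
          exact hcount j y hy
    _ ≤ ∫⁻ y, kakeyaIntegrand (δ / δ') 𝕊 y := setLIntegral_le_lintegral _ _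
    _ ≤ ENNReal.ofReal (C₂ * (δ / δ') ^ (n + 1)) * ∏ j, (#(𝕊 j) : ℝ≥0∞) ^ (1 / (n : ℝ)) :=
        kakIneq_iff.mp H₂ _ (h𝕋.of_frames fun j S hS =>
          (exists_frame_eq_of_mem_familyCover hS).imp fun T hT =>
            ⟨tubesMeetingCube_subset hT.1, hT.2⟩)
    _ ≤ ENNReal.ofReal (C₂ * (δ / δ') ^ (n + 1)) * (ENNReal.ofReal (3 * 3) ^ (n + 1) *
          ∏ j, (#(tubesMeetingCube δ δ' u k (𝕋 j)) : ℝ≥0∞) ^ (1 / (n : ℝ))) := by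
        gcongr
        simpa using prod_rpow_le_of_le_mul_pow hn fun j => card_cubeCover_le (s := 𝕋 j) hn hδ hδ' k
    _ = _ := by
        rw [← mul_assoc, ← ENNReal.ofReal_pow (by norm_num), mul_comm (ENNReal.ofReal _),
          ← ENNReal.ofReal_mul (by positivity)]
        norm_num [mul_assoc]

/-- `δ'`-tubes covering the `δ' / 8`-neighbourhoods of the `δ`-tubes of `s`. -/
noncomputable def thickCover (δ δ' : ℝ) (s : Finset (Tube n)) : Finset (Tube n) :=
  familyCover δ' (fun T i => ⟪T.1, T.2 i⟫_ℝ - δ' / 8) (fun i => tubeSide δ i + 2 * (δ' / 8)) s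

theorem card_tubesMeetingCube_le_tubeCount {s : Finset (Tube n)} (hδ' : 0 < δ') (hu : 0 < u)
    (hu' : (n + 1) * u ≤ 1 / 16) (hs : ∀ T ∈ s, Orthonormal ℝ T.2) (y : Point n) :
    (#(tubesMeetingCube δ δ' u (cubeIndex u y) s) : ℝ≥0∞) ≤
      tubeCount δ' (thickCover δ δ' s) (δ' • y) := by
  classical
  rw [tubesMeetingCube, Finset.natCast_card_filter]
  refine sum_le_tubeCount_familyCover hδ' hs fun T hT => ?_
  split_ifs with hmeet
  · obtain ⟨y₀, hy₀, hTy₀⟩ := hmeet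
    have hclose : ‖y - y₀‖ ≤ 1 / 8 := calc
      ‖y - y₀‖ ≤ ‖y - cubeCorner u (cubeIndex u y)‖ + ‖y₀ - cubeCorner u (cubeIndex u y₀)‖ := by
        rw [hy₀]; simpa only [dist_eq_norm] using dist_triangle_right y y₀ _
      _ ≤ 1 / 16 + 1 / 16 := add_le_add (norm_sub_cubeCorner_le_of_mul_le hu hu' y)
          (norm_sub_cubeCorner_le_of_mul_le hu hu' y₀)
      _ = 1 / 8 := by norm_num
    have hnear : ‖δ' • y - δ' • y₀‖ ≤ δ' / 8 := by
      rw [← smul_sub, norm_smul, Real.norm_of_nonneg hδ'.le]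
      nlinarith
    rw [Set.indicator_of_mem (mem_frameBox_of_norm_sub_le (hs T hT) hTy₀ hnear)]
  · exact zero_le

theorem card_thickCover_le {s : Finset (Tube n)} (hn : n ≠ 0) (hδ : 0 ≤ δ) (hδδ' : δ ≤ δ')
    (hδ'1 : δ' ≤ 1) : (#(thickCover δ δ' s) : ℝ≥0∞) ≤ #s * ENNReal.ofReal (4 * 4) ^ n := by
  have hδ' := hδ.trans hδδ'
  refine card_familyCover_le hn hδ' (fun i => ?_) (fun i => ?_) ?_
  · linarith [tubeSide_nonneg hδ i]
  · have : (δ + 2 * (δ' / 8)) / δ' ≤ 2 := by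
      rcases hδ'.eq_or_lt with h | h
      · simp [← h]
      · rw [div_le_iff₀ h]; linarith
    simp only [tubeSide, Fin.lastCases_castSucc]
    linarith
  · simp only [tubeSide, Fin.lastCases_last]
    linarith

theorem lintegral_kakeyaIntegrand_thickCover_le {C₁ : ℝ} (hn : n ≠ 0) (hδ : 0 ≤ δ)
    (hδδ' : δ ≤ δ') (hδ'1 : δ' ≤ 1) (H₁ : KakIneq n c δ' C₁) (h𝕋 : IsTransversalFamily c 𝕋) :
    ∫⁻ x, kakeyaIntegrand δ' (fun j => thickCover δ δ' (𝕋 j)) x ≤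
      ENNReal.ofReal (16 ^ (n + 1) * C₁ * δ' ^ (n + 1)) *
        ∏ j, (#(𝕋 j) : ℝ≥0∞) ^ (1 / (n : ℝ)) := by
  calc ∫⁻ x, kakeyaIntegrand δ' (fun j => thickCover δ δ' (𝕋 j)) x
      ≤ ENNReal.ofReal (C₁ * δ' ^ (n + 1)) *
          ∏ j, (#(thickCover δ δ' (𝕋 j)) : ℝ≥0∞) ^ (1 / (n : ℝ)) :=
        kakIneq_iff.mp H₁ _ (h𝕋.of_frames fun _ _ => exists_frame_eq_of_mem_familyCover)
    _ ≤ ENNReal.ofReal (C₁ * δ' ^ (n + 1)) * (ENNReal.ofReal (4 * 4) ^ (n + 1) *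
          ∏ j, (#(𝕋 j) : ℝ≥0∞) ^ (1 / (n : ℝ))) := by
        gcongr
        simpa using prod_rpow_le_of_le_mul_pow hn fun j =>
          card_thickCover_le (s := 𝕋 j) hn hδ hδδ' hδ'1
    _ = _ := by
        rw [← mul_assoc, ← ENNReal.ofReal_pow (by norm_num), mul_comm (ENNReal.ofReal _),
          ← ENNReal.ofReal_mul (by positivity)]
        norm_num [mul_assoc]

end InductionOnScales

theorem _root_.KakIneq.compose {c δ δ' C₁ C₂ : ℝ} (H₁ : KakIneq n c δ' C₁)
    (H₂ : KakIneq n c (δ / δ') C₂) (hn : n ≠ 0) (hδ : 0 < δ) (hδδ' : δ ≤ δ') (hδ'1 : δ' ≤ 1)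
    (hC₁ : 0 ≤ C₁) :
    KakIneq n c δ ((2304 * (n + 1)) ^ (n + 1) * C₂ * C₁) := by
  refine kakIneq_iff.mpr fun 𝕋 h𝕋 => ?_
  have hδ' := hδ.trans_le hδδ'
  obtain ⟨u, hu, hu', hu144⟩ : ∃ u : ℝ, 0 < u ∧ (n + 1) * u ≤ 1 / 16 ∧
      u ^ (n + 1) * (2304 * (n + 1)) ^ (n + 1) = 9 ^ (n + 1) * 16 ^ (n + 1) := by
    refine ⟨1 / (16 * (n + 1)), by positivity, le_of_eq (by field_simp), ?_⟩
    rw [← mul_pow, ← mul_pow]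
    field_simp
    norm_num
  set 𝕋' : Fin (n + 1) → Finset (Tube n) := fun j => thickCover δ δ' (𝕋 j)
  have hcubes : ENNReal.ofReal (u ^ (n + 1)) * ∫⁻ y, kakeyaIntegrand δ 𝕋 (δ' • y) ≤
      ENNReal.ofReal (9 ^ (n + 1) * C₂ * (δ / δ') ^ (n + 1)) *
        ∫⁻ y, kakeyaIntegrand δ' 𝕋' (δ' • y) :=
    mul_lintegral_le_of_forall_fiber (measurable_cubeIndex u)
      (fun k => by simpa using volume_cubeIndex_preimage hu k)
      (setLIntegral_cube_le hn hδ hδ' hu hu' H₂ h𝕋) fun y => by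
        unfold kakeyaIntegrand
        gcongr with j
        exact card_tubesMeetingCube_le_tubeCount hδ' hu hu' (h𝕋.1 j) y
  have hthick := lintegral_kakeyaIntegrand_thickCover_le hn hδ.le hδδ' hδ'1 H₁ h𝕋
  rw [lintegral_eq_mul_lintegral_comp_smul volume hδ'] at hthick ⊢
  rw [finrank_euclideanSpace_fin] at hthick ⊢
  have hconst : ENNReal.ofReal (9 ^ (n + 1) * C₂ * (δ / δ') ^ (n + 1)) *
      ENNReal.ofReal (16 ^ (n + 1) * C₁ * δ' ^ (n + 1)) =
      ENNReal.ofReal (u ^ (n + 1)) *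
        ENNReal.ofReal ((2304 * (n + 1)) ^ (n + 1) * C₂ * C₁ * δ ^ (n + 1)) := by
    rw [← ENNReal.ofReal_mul' (by positivity), ← ENNReal.ofReal_mul (by positivity)]
    congr 1
    calc _ = 9 ^ (n + 1) * 16 ^ (n + 1) * C₂ * C₁ * ((δ / δ') ^ (n + 1) * δ' ^ (n + 1)) := by ring
      _ = u ^ (n + 1) * (2304 * (n + 1)) ^ (n + 1) * C₂ * C₁ * δ ^ (n + 1) := by
        rw [← mul_pow (δ / δ'), div_mul_cancel₀ _ hδ'.ne', hu144]
      _ = _ := by ring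
  exact le_of_mul_le_of_mul_le (ENNReal.ofReal_pos.mpr (by positivity)).ne'
    ENNReal.ofReal_ne_top hcubes hthick hconst

end Kakeya

theorem kakeya_const_self_similar_general (n : ℕ) (hn : 1 ≤ n) (c : ℝ) :
    ∃ c₀ : ℝ, 1 ≤ c₀ ∧ ∀ δ δ' : ℝ, 0 < δ → δ ≤ δ' → δ' ≤ 1 →
      KakConst n c δ ≤ c₀ * KakConst n c (δ / δ') * KakConst n c δ' := by
  have hn0 : n ≠ 0 := by omega
  refine ⟨(2304 * (n + 1)) ^ (n + 1), one_le_pow₀ (by linarith), fun δ δ' hδ hδδ' hδ'1 => ?_⟩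
  have hδσ : δ ≤ δ / δ' := le_div_self hδ.le (hδ.trans_le hδδ') hδ'1
  refine csInf_le_mul_csInf_mul_csInf (by positivity) (fun _ h => h.1) (fun _ h => h.1)
    (fun _ h => h.1) (fun C₂ hC₂ C₁ hC₁ => ⟨mul_nonneg (mul_nonneg (by positivity) hC₂.1) hC₁.1,
      hC₁.2.compose hC₂.2 hn0 hδ hδδ' hδ'1 hC₁.1⟩) ?_
  rintro ⟨C, hC, h⟩
  exact ⟨⟨_, by positivity, h.coarsen hn0 hδ hδσ⟩, ⟨_, by positivity, h.coarsen hn0 hδ hδδ'⟩⟩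

/-- Self-similarity (induction on scales) of the best constant in the `d`-linear Kakeya
inequality (`d = n+1 ≥ 2`): there is `c₀ ≥ 1`, depending only on `d` and the
transversality constant `c`, with `C_kak(δ) ≤ c₀ C_kak(δ/δ') C_kak(δ')` whenever
`0 < δ ≤ δ' ≤ 1`. -/
theorem kakeya_const_self_similar (n : ℕ) (hn : 1 ≤ n) (c : ℝ) (hc : 0 < c) :
    ∃ c₀ : ℝ, 1 ≤ c₀ ∧ ∀ δ δ' : ℝ, 0 < δ → δ ≤ δ' → δ' ≤ 1 →
      KakConst n c δ ≤ c₀ * KakConst n c (δ / δ') * KakConst n c δ' :=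
  kakeya_const_self_similar_general n hn c
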